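/- arXiv:math/0206298 — 2 statements merged into one kernel-verified Lean document; each statement's English description precedes it below -/
import Mathlib

section
/- If a tuple of matrices M_1, ..., M_{p+1} in GL(n, ℂ) (n ≥ 2) with product equal to the identity has generic eigenvalues (no non-genericity relation of the form ∏_{j} ∏_{k∈Φ_j} σ_{k,j} = 1 with all |Φ_j| equal to some m < n holds), then the tuple is irreducible. -/
open Polynomial Matrix

/-! If `V` is an invariant subspace with `0 < m = dim V < n`, the characteristic polynomial of
each `M_j` restricted to `V` divides that of `M_j`, so its roots are the `σ_{k,j}` for `k` in some
`Φ_j` with `|Φ_j| = m`. Their product is the determinant of the restriction, and these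
determinants multiply to the determinant of `(M_1 ⋯ M_{p+1})|_V = 1`: a non-genericity relation. -/

theorem Multiset.exists_le_map_eq_of_le_map {α β : Type*} (f : α → β) {s : Multiset β}
    {t : Multiset α} (h : s ≤ t.map f) : ∃ u ≤ t, u.map f = s := by
  induction s using Quotient.inductionOn
  induction t using Quotient.inductionOn
  obtain ⟨l, hl, hsub⟩ := Multiset.coe_le.1 h
  obtain ⟨l', hl', rfl⟩ := List.sublist_map_iff.1 hsub
  exact ⟨l', hl'.subperm, Quot.sound hl⟩

theorem Finset.exists_subset_val_map_eq_of_le_map {ι β : Type*} (a : ι → β) (s : Finset ι)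
    {t : Multiset β} (h : t ≤ s.val.map a) : ∃ Φ ⊆ s, Φ.val.map a = t := by
  obtain ⟨u, hu, rfl⟩ := Multiset.exists_le_map_eq_of_le_map a h
  exact ⟨⟨u, Multiset.nodup_of_le hu s.nodup⟩, Multiset.subset_of_le hu, rfl⟩

theorem Polynomial.roots_finsetProd_X_sub_C {R ι : Type*} [CommRing R] [IsDomain R]
    (s : Finset ι) (a : ι → R) : (∏ k ∈ s, (X - C (a k))).roots = s.val.map a := by
  rw [Finset.prod_eq_multiset_prod, ← roots_multiset_prod_X_sub_C (s.val.map a), Multiset.map_map]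
  rfl

theorem LinearMap.charpoly_eq_charpoly_restrict_mul_charpoly_mapQ {K V : Type*} [Field K]
    [Infinite K] [AddCommGroup V] [Module K V] [FiniteDimensional K V] (W : Submodule K V)
    (f : Module.End K V) (hf : W ≤ W.comap f) :
    f.charpoly = (f.restrict hf).charpoly * (W.mapQ W f hf).charpoly := by
  -- at `t`, this is `det (t - f) = det (t - f|_W) * det (t - f mod W)`
  refine Polynomial.funext fun t => ?_
  have ht : W ≤ W.comap (algebraMap K _ t - f) := fun x hx =>
    W.sub_mem (W.smul_mem t hx) (hf hx)
  have hres : (algebraMap K _ t - f).restrict ht = algebraMap K _ t - f.restrict hf := by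
    ext; simp
  have hquot : W.mapQ W (algebraMap K _ t - f) ht = algebraMap K _ t - W.mapQ W f hf := by
    ext; simp
  rw [eval_mul, eval_charpoly, eval_charpoly, eval_charpoly, LinearMap.det_eq_det_mul_det W _ ht,
    hres, hquot]

theorem LinearMap.roots_charpoly_restrict_le {K V : Type*} [Field K] [Infinite K] [AddCommGroup V]
    [Module K V] [FiniteDimensional K V] {W : Submodule K V} (f : Module.End K V)
    (hf : W ≤ W.comap f) : (f.restrict hf).charpoly.roots ≤ f.charpoly.roots :=
  roots.le_of_dvd f.charpoly_monic.ne_zero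
    ⟨_, f.charpoly_eq_charpoly_restrict_mul_charpoly_mapQ W hf⟩

theorem LinearMap.coe_list_prod_map_restrict_apply {R M ι : Type*} [Semiring R] [AddCommMonoid M]
    [Module R M] {W : Submodule R M} (g : ι → Module.End R M) (hg : ∀ i, W ≤ W.comap (g i))
    (l : List ι) (x : W) :
    ((l.map fun i => (g i).restrict (hg i)).prod x : M) = (l.map g).prod x := by
  induction l with
  | nil => rfl
  | cons i l ih => simp only [List.map_cons, List.prod_cons, Module.End.mul_apply,
      coe_restrict_apply, ih]

theorem LinearMap.prod_det_restrict_eq_one {R M : Type*} [CommRing R] [AddCommGroup M] [Module R M]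
    {W : Submodule R M} {n : ℕ} (g : Fin n → Module.End R M) (hg : ∀ i, W ≤ W.comap (g i))
    (hprod : (List.ofFn g).prod = 1) : ∏ i, ((g i).restrict (hg i)).det = 1 := by
  have hres : (List.ofFn fun i => (g i).restrict (hg i)).prod = 1 := by
    ext x
    rw [List.ofFn_eq_map, coe_list_prod_map_restrict_apply, ← List.ofFn_eq_map, hprod]
    rfl
  calc ∏ i, ((g i).restrict (hg i)).det
      = LinearMap.det (List.ofFn fun i => (g i).restrict (hg i)).prod := by
        rw [map_list_prod, List.map_ofFn, List.prod_ofFn]; rfl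
    _ = 1 := by rw [hres, map_one]

theorem stmt10_general (p n : ℕ) (M : Fin (p + 1) → Matrix (Fin n) (Fin n) ℂ)
    (hprod : (List.ofFn M).prod = 1)
    (σ : Fin (p + 1) → Fin n → ℂ)
    (hσ : ∀ j, (M j).charpoly = ∏ k, (X - C (σ j k)))
    (hgen : ¬∃ (m : ℕ) (Φ : Fin (p + 1) → Finset (Fin n)),
      0 < m ∧ m < n ∧ (∀ j, (Φ j).card = m) ∧ ∏ j, ∏ k ∈ Φ j, σ j k = 1) :
    ∀ V : Submodule ℂ (Fin n → ℂ),
      (∀ j, ∀ v ∈ V, Matrix.toLin' (M j) v ∈ V) → V = ⊥ ∨ V = ⊤ := by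
  intro V hV
  by_contra! ⟨hbot, htop⟩
  let f : Fin (p + 1) → Module.End ℂ V := fun j => (toLin' (M j)).restrict (hV j)
  have hroots j : (f j).charpoly.roots ≤ Finset.univ.val.map (σ j) := by
    simpa [charpoly_toLin', hσ, roots_finsetProd_X_sub_C] using
      (toLin' (M j)).roots_charpoly_restrict_le (hV j)
  choose Φ _ hΦ using fun j => Finset.exists_subset_val_map_eq_of_le_map (σ j) _ (hroots j)
  have hcard j : (Φ j).card = Module.finrank ℂ V := by
    rw [Finset.card_def, ← Multiset.card_map (σ j), hΦ, IsAlgClosed.card_roots_eq_natDegree,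
      LinearMap.charpoly_natDegree]
  have hdet j : ∏ k ∈ Φ j, σ j k = (f j).det := by
    rw [Module.End.det_eq_prod_roots_charpoly_of_splits (IsAlgClosed.splits _), ← hΦ]
    rfl
  refine hgen ⟨Module.finrank ℂ V, Φ, ?_, ?_, hcard, ?_⟩
  · exact Module.finrank_pos_iff.2 (Submodule.nontrivial_iff_ne_bot.2 hbot)
  · simpa using Submodule.finrank_lt htop
  · simp only [hdet]
    refine LinearMap.prod_det_restrict_eq_one _ hV ?_
    have h := congrArg toLinAlgEquiv' hprod
    rwa [map_list_prod, List.map_ofFn, map_one] at h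

theorem stmt10 (p n : ℕ) (hn : 2 ≤ n) (M : Fin (p + 1) → Matrix (Fin n) (Fin n) ℂ)
    (hinv : ∀ j, IsUnit (M j))
    (hprod : (List.ofFn M).prod = 1)
    (σ : Fin (p + 1) → Fin n → ℂ)
    (hσ : ∀ j, (M j).charpoly = ∏ k, (X - C (σ j k)))
    (hgen : ¬∃ (m : ℕ) (Φ : Fin (p + 1) → Finset (Fin n)),
      0 < m ∧ m < n ∧ (∀ j, (Φ j).card = m) ∧ ∏ j, ∏ k ∈ Φ j, σ j k = 1) :
    ∀ V : Submodule ℂ (Fin n → ℂ),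
      (∀ j, ∀ v ∈ V, Matrix.toLin' (M j) v ∈ V) → V = ⊥ ∨ V = ⊤ :=
  stmt10_general p n M hprod σ hσ hgen
end

section
/- For any matrices A_1, ..., A_{p+1} in gl(n, ℂ) with A_1 + ⋯ + A_{p+1} = 0 that form an irreducible tuple, and for any b_1, ..., b_{p+1} ∈ ℂ with b_1 + ⋯ + b_{p+1} = 0, one has rank(A_1 − b_1 I) + ⋯ + rank(A_{p+1} − b_{p+1} I) ≥ 2n. -/
/-!
Put `T j = A j - b j • 1`. Then `∑ T j = 0`, and the tuple `(T j)` is irreducible like `(A j)`.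
Since `n ≥ 2` not every `T j` vanishes, so irreducibility forces `⋂ ker T j = 0` and
`∑ range T j = ℂⁿ` (both subspaces are invariant). Hence `v ↦ (T j v)_j` embeds `ℂⁿ` into
`∏ range T j`, the sum map `∏ range T j → ℂⁿ` is onto, and their composite is `∑ T j = 0`;
counting dimensions gives `n + n ≤ ∑ rank T j`.
-/

open Matrix Module

section Counting

variable {K V W M : Type*} [Field K] [AddCommGroup V] [Module K V] [AddCommGroup W] [Module K W]
  [AddCommGroup M] [Module K M] [FiniteDimensional K M]

theorem finrank_add_finrank_le_of_injective_of_surjective {g : V →ₗ[K] M} {S : M →ₗ[K] W}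
    (hg : Function.Injective g) (hS : Function.Surjective S) (hSg : S ∘ₗ g = 0) :
    finrank K V + finrank K W ≤ finrank K M := by
  have hrange : LinearMap.range g ≤ LinearMap.ker S := by
    rintro _ ⟨v, rfl⟩
    exact congrArg (· v) hSg
  calc finrank K V + finrank K W
      = finrank K (LinearMap.range g) + finrank K (LinearMap.range S) := by
        rw [LinearMap.finrank_range_of_inj hg, LinearMap.range_eq_top.mpr hS, finrank_top]
    _ ≤ finrank K (LinearMap.ker S) + finrank K (LinearMap.range S) := by
        gcongr
        exact Submodule.finrank_mono hrange
    _ = finrank K M := by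
        rw [add_comm, LinearMap.finrank_range_add_finrank_ker]

variable {ι : Type*} [Fintype ι] [DecidableEq ι] [FiniteDimensional K W]

theorem finrank_add_finrank_le_sum_finrank_range (f : ι → V →ₗ[K] W) (hsum : ∑ j, f j = 0)
    (hker : ⨅ j, LinearMap.ker (f j) = ⊥) (hrange : ⨆ j, LinearMap.range (f j) = ⊤) :
    finrank K V + finrank K W ≤ ∑ j, finrank K (LinearMap.range (f j)) := by
  set S : (Π j, LinearMap.range (f j)) →ₗ[K] W :=
    ∑ j, (LinearMap.range (f j)).subtype ∘ₗ LinearMap.proj j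
  have hg : Function.Injective (LinearMap.pi fun j => (f j).rangeRestrict) := by
    simp only [← LinearMap.ker_eq_bot, LinearMap.ker_pi, LinearMap.ker_rangeRestrict, hker]
  have hS : Function.Surjective S := by
    rw [← LinearMap.range_eq_top, eq_top_iff, ← hrange, iSup_le_iff]
    rintro j _ ⟨v, rfl⟩
    refine ⟨Pi.single j ((f j).rangeRestrict v), ?_⟩
    simp only [S, LinearMap.sum_apply, LinearMap.comp_apply, LinearMap.proj_apply,
      Submodule.subtype_apply]
    rw [Finset.sum_eq_single_of_mem j (Finset.mem_univ j) fun k _ hk => by simp [hk]]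
    simp
  have hSg : S ∘ₗ LinearMap.pi (fun j => (f j).rangeRestrict) = 0 := by
    ext v
    simp [S, ← LinearMap.sum_apply, hsum]
  simpa [finrank_pi_fintype] using
    finrank_add_finrank_le_of_injective_of_surjective hg hS hSg

end Counting

def IsIrreducibleFamily {K V ι : Type*} [Field K] [AddCommGroup V] [Module K V]
    (T : ι → Module.End K V) : Prop :=
  ∀ W : Submodule K V, (∀ j, ∀ v ∈ W, T j v ∈ W) → W = ⊥ ∨ W = ⊤

namespace IsIrreducibleFamily

variable {K V ι : Type*} [Field K] [AddCommGroup V] [Module K V] {T : ι → Module.End K V}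

theorem sub_smul_one (hT : IsIrreducibleFamily T) (b : ι → K) :
    IsIrreducibleFamily fun j => T j - b j • 1 := by
  intro W hW
  refine hT W fun j v hv => ?_
  simpa using W.add_mem (hW j v hv) (W.smul_mem (b j) hv)

theorem exists_ne_zero [FiniteDimensional K V] (hT : IsIrreducibleFamily T)
    (hV : 1 < finrank K V) : ∃ j, T j ≠ 0 := by
  by_contra! hzero
  obtain ⟨v, hv⟩ := finrank_pos_iff_exists_ne_zero.mp (show 0 < finrank K V by omega)
  have hline : finrank K (K ∙ v) = 1 := finrank_span_singleton hv
  rcases hT (K ∙ v) (fun j w _ => by simp [hzero j]) with hbot | htop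
  · exact hv (by simpa [hbot] using Submodule.mem_span_singleton_self (R := K) v)
  · rw [htop, finrank_top] at hline
    omega

theorem iInf_ker_eq_bot (hT : IsIrreducibleFamily T) (hne : ∃ j, T j ≠ 0) :
    ⨅ j, LinearMap.ker (T j) = ⊥ := by
  refine (hT _ fun j v hv => ?_).resolve_right fun htop => ?_
  · simp only [Submodule.mem_iInf, LinearMap.mem_ker] at hv ⊢
    exact fun k => by rw [hv j, map_zero]
  · obtain ⟨j, hj⟩ := hne
    have hv (v : V) : v ∈ ⨅ j, LinearMap.ker (T j) := htop ▸ Submodule.mem_top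
    exact hj (LinearMap.ext fun v => Submodule.mem_iInf _ |>.mp (hv v) j)

theorem iSup_range_eq_top (hT : IsIrreducibleFamily T) (hne : ∃ j, T j ≠ 0) :
    ⨆ j, LinearMap.range (T j) = ⊤ := by
  refine (hT _ fun j v _ =>
    Submodule.mem_iSup_of_mem j (LinearMap.mem_range_self _ v)).resolve_left fun hbot => ?_
  obtain ⟨j, hj⟩ := hne
  exact hj <| LinearMap.range_eq_bot.mp <| le_bot_iff.mp <|
    hbot ▸ le_iSup (fun j => LinearMap.range (T j)) j

end IsIrreducibleFamily

theorem stmt16 (p n : ℕ) (hn : 2 ≤ n) (A : Fin (p + 1) → Matrix (Fin n) (Fin n) ℂ)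
    (hsum : ∑ j, A j = 0)
    (hirr : ∀ V : Submodule ℂ (Fin n → ℂ),
      (∀ j, ∀ v ∈ V, Matrix.toLin' (A j) v ∈ V) → V = ⊥ ∨ V = ⊤)
    (b : Fin (p + 1) → ℂ) (hbs : ∑ j, b j = 0) :
    2 * n ≤ ∑ j, (A j - b j • (1 : Matrix (Fin n) (Fin n) ℂ)).rank := by
  set T : Fin (p + 1) → Module.End ℂ (Fin n → ℂ) := fun j => toLin' (A j) - b j • 1
  have hT : IsIrreducibleFamily T := IsIrreducibleFamily.sub_smul_one hirr b
  have hTsum : ∑ j, T j = 0 := by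
    simp only [T, Finset.sum_sub_distrib, ← map_sum, hsum, ← Finset.sum_smul, hbs]
    simp
  have hne : ∃ j, T j ≠ 0 := hT.exists_ne_zero (by rw [finrank_fin_fun]; omega)
  have key := finrank_add_finrank_le_sum_finrank_range T hTsum (hT.iInf_ker_eq_bot hne)
    (hT.iSup_range_eq_top hne)
  have hrank (j) :
      (A j - b j • (1 : Matrix (Fin n) (Fin n) ℂ)).rank = finrank ℂ (LinearMap.range (T j)) := by
    rw [Matrix.rank, ← Matrix.toLin'_apply', map_sub, map_smul, Matrix.toLin'_one]
    rfl
  simp only [hrank, finrank_fin_fun] at key ⊢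
  omega
end
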